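/- arXiv:1308.6175 — 2 statements merged into one kernel-verified Lean document; each statement's English description precedes it below -/
import Mathlib

section
/- Let C_0 ⊆ C_1 ⊆ ... ⊆ C_{a-1} ⊆ C_a = (ZMod 2)^n be a family of nested binary linear codes. Then the code formula set Γ_CF is an additive subgroup of ℤ^n (i.e., a lattice) if and only if the chain is closed under Schur product, i.e., for every i ∈ {0, ..., a-1} and every c, d ∈ C_i, the componentwise product c ∗ d belongs to C_{i+1}. -/
noncomputable section

/-- The natural embedding of `(ZMod 2)^n` into `ℤ^n`, applying coordinatewise the map
sending `0` to `0` and `1` to `1`. -/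
def psi {n : ℕ} (x : Fin n → ZMod 2) : Fin n → ℤ := fun k => ((x k).val : ℤ)

/-- The code formula set `Γ_CF = ψ(C₀) + 2ψ(C₁) + ... + 2^{a-1}ψ(C_{a-1}) + 2^a ℤ^n`
associated to a chain of binary codes `C₀ ⊆ C₁ ⊆ ... ⊆ C_a = (ZMod 2)^n`. -/
def GammaCF {n : ℕ} (a : ℕ) (C : ℕ → Submodule (ZMod 2) (Fin n → ZMod 2)) :
    Set (Fin n → ℤ) :=
  { x | ∃ (c : ℕ → Fin n → ZMod 2) (l : Fin n → ℤ),
      (∀ i < a, c i ∈ C i) ∧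
      x = (∑ i ∈ Finset.range a, (2 ^ i : ℤ) • psi (c i)) + (2 ^ a : ℤ) • l }

/-! Since `Γ_{a+1}(C) = ψ(C₀) + 2 Γ_a(C₁, C₂, …)`, closure under addition is binary addition
with carries: adding digits `x, y, z ∈ C_i` leaves the digit `x + y + z` and the carry
`x * y + x * z + y * z`, which lies in `C_{i+1}` when the chain is closed under Schur product.
As `2^a ℤ^n ⊆ Γ`, closure under addition already gives `-x = (2^a - 1) x + 2^a (-x) ∈ Γ`.
Conversely, binary digits are unique, so `2^j ψ(v) ∈ Γ` exactly when `v ∈ C_j`; in a lattice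
`2^{i+1} ψ(c * d) = 2^i ψ(c) + 2^i ψ(d) - 2^i ψ(c + d)` then forces `c * d ∈ C_{i+1}`. -/

lemma psi_zero {n : ℕ} : psi (0 : Fin n → ZMod 2) = 0 := by
  funext k; simp [psi]

lemma intCast_psi_apply {n : ℕ} (x : Fin n → ZMod 2) (k : Fin n) :
    ((psi x k : ℤ) : ZMod 2) = x k := by
  simp [psi]

lemma psi_add_psi_add_psi {n : ℕ} (x y z : Fin n → ZMod 2) :
    psi x + psi y + psi z = psi (x + y + z) + (2 : ℤ) • psi (x * y + x * z + y * z) := by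
  funext k
  have carry : ∀ u v w : ZMod 2, ((u.val : ℤ) + v.val + w.val
      = ((u + v + w).val : ℤ) + 2 * ((u * v + u * w + v * w).val : ℤ)) := by decide
  simpa [psi] using carry (x k) (y k) (z k)

lemma psi_add_psi {n : ℕ} (x y : Fin n → ZMod 2) :
    psi x + psi y = psi (x + y) + (2 : ℤ) • psi (x * y) := by
  simpa [psi_zero] using psi_add_psi_add_psi x y 0

lemma psi_add_two_smul_inj {n : ℕ} {c c' : Fin n → ZMod 2} {y y' : Fin n → ℤ} :
    psi c + (2 : ℤ) • y = psi c' + (2 : ℤ) • y' ↔ c = c' ∧ y = y' := by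
  refine ⟨fun h => ?_, by rintro ⟨rfl, rfl⟩; rfl⟩
  have hc : c = c' := by
    funext k
    simpa [intCast_psi_apply, show (2 : ZMod 2) = 0 from rfl] using
      congrArg (fun z : Fin n → ℤ => ((z k : ℤ) : ZMod 2)) h
  subst hc
  exact ⟨rfl, smul_right_injective _ two_ne_zero (add_left_cancel h)⟩

lemma GammaCF_zero {n : ℕ} (C : ℕ → Submodule (ZMod 2) (Fin n → ZMod 2)) :
    GammaCF 0 C = Set.univ :=
  Set.eq_univ_of_forall fun x => ⟨0, x, by simp, by simp⟩

lemma mem_GammaCF_succ {n a : ℕ} {C : ℕ → Submodule (ZMod 2) (Fin n → ZMod 2)}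
    {x : Fin n → ℤ} :
    x ∈ GammaCF (a + 1) C ↔
      ∃ c ∈ C 0, ∃ y ∈ GammaCF a (fun i => C (i + 1)), x = psi c + (2 : ℤ) • y := by
  have shift : ∀ (c : ℕ → Fin n → ZMod 2) (l : Fin n → ℤ),
      (∑ i ∈ Finset.range (a + 1), (2 ^ i : ℤ) • psi (c i)) + (2 ^ (a + 1) : ℤ) • l
        = psi (c 0) + (2 : ℤ) • ((∑ i ∈ Finset.range a, (2 ^ i : ℤ) • psi (c (i + 1)))
          + (2 ^ a : ℤ) • l) := by
    intro c l
    simp only [Finset.sum_range_succ', pow_succ', smul_add, Finset.smul_sum, smul_smul,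
      pow_zero, one_smul]
    abel
  constructor
  · rintro ⟨c, l, hc, rfl⟩
    exact ⟨c 0, hc 0 a.succ_pos, _, ⟨fun i => c (i + 1), l, fun i hi => hc (i + 1) (by omega),
      rfl⟩, shift c l⟩
  · rintro ⟨c₀, hc₀, y, ⟨c, l, hc, rfl⟩, rfl⟩
    let c' : ℕ → Fin n → ZMod 2 := fun | 0 => c₀ | i + 1 => c i
    exact ⟨c', l, fun | 0, _ => hc₀ | i + 1, hi => hc i (by omega), (shift c' l).symm⟩

lemma two_pow_smul_mem_GammaCF {n a : ℕ} (C : ℕ → Submodule (ZMod 2) (Fin n → ZMod 2))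
    (l : Fin n → ℤ) : (2 ^ a : ℤ) • l ∈ GammaCF a C :=
  ⟨0, l, fun i _ => (C i).zero_mem, by simp [psi_zero]⟩

lemma two_pow_smul_psi_mem_GammaCF_iff {n a j : ℕ} {C : ℕ → Submodule (ZMod 2) (Fin n → ZMod 2)}
    (hj : j < a) {v : Fin n → ZMod 2} : (2 ^ j : ℤ) • psi v ∈ GammaCF a C ↔ v ∈ C j := by
  induction j generalizing a C with
  | zero =>
    obtain ⟨a, rfl⟩ := Nat.exists_eq_add_one_of_ne_zero hj.ne'
    rw [pow_zero, one_smul, mem_GammaCF_succ]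
    constructor
    · rintro ⟨c, hc, y, -, h⟩
      have hparity : psi v + (2 : ℤ) • 0 = psi c + (2 : ℤ) • y := by rw [smul_zero, add_zero, h]
      exact (psi_add_two_smul_inj.1 hparity).1 ▸ hc
    · exact fun hv => ⟨v, hv, 0, by simpa using two_pow_smul_mem_GammaCF _ 0, by simp⟩
  | succ j ih =>
    have hshift : (2 ^ (j + 1) : ℤ) • psi v = psi 0 + (2 : ℤ) • ((2 ^ j : ℤ) • psi v) := by
      rw [psi_zero, zero_add, smul_smul, pow_succ']
    obtain ⟨a, rfl⟩ := Nat.exists_eq_add_one_of_ne_zero (Nat.ne_zero_of_lt hj)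
    rw [mem_GammaCF_succ, hshift]
    constructor
    · rintro ⟨c, -, y, hy, h⟩
      obtain ⟨-, rfl⟩ := psi_add_two_smul_inj.1 h
      exact (ih (Nat.lt_of_succ_lt_succ hj)).1 hy
    · exact fun hv => ⟨0, zero_mem _, _, (ih (Nat.lt_of_succ_lt_succ hj)).2 hv, rfl⟩

lemma add_add_psi_mem_GammaCF {n a : ℕ} {C : ℕ → Submodule (ZMod 2) (Fin n → ZMod 2)}
    (hC : ∀ i < a, ∀ c ∈ C i, ∀ d ∈ C i, c * d ∈ C (i + 1))
    {x y : Fin n → ℤ} (hx : x ∈ GammaCF a C) (hy : y ∈ GammaCF a C)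
    {e : Fin n → ZMod 2} (he : e ∈ C 0) : x + y + psi e ∈ GammaCF a C := by
  induction a generalizing C x y e with
  | zero => simp [GammaCF_zero]
  | succ a ih =>
    rw [mem_GammaCF_succ] at hx hy ⊢
    obtain ⟨c, hc, x', hx', rfl⟩ := hx
    obtain ⟨d, hd, y', hy', rfl⟩ := hy
    have hschur := hC 0 a.succ_pos
    have hcarry : c * d + c * e + d * e ∈ C 1 :=
      add_mem (add_mem (hschur _ hc _ hd) (hschur _ hc _ he)) (hschur _ hd _ he)
    refine ⟨c + d + e, add_mem (add_mem hc hd) he, _,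
      ih (fun i hi => hC (i + 1) (by omega)) hx' hy' hcarry, ?_⟩
    linear_combination (norm := module) psi_add_psi_add_psi c d e

lemma AddSubmonoid.neg_mem_of_nsmul_mem {M : Type*} [AddCommGroup M] (S : AddSubmonoid M)
    {N : ℕ} (hN : 0 < N) (hS : ∀ x, N • x ∈ S) {x : M} (hx : x ∈ S) : -x ∈ S := by
  obtain ⟨N, rfl⟩ := Nat.exists_eq_succ_of_ne_zero hN.ne'
  have hneg : -x = N • x + (N + 1) • -x := by rw [add_smul, one_smul, smul_neg]; abel
  rw [hneg]
  exact add_mem (nsmul_mem hx N) (hS _)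

theorem gammaCF_lattice_iff_schur_general {n a : ℕ}
    (C : ℕ → Submodule (ZMod 2) (Fin n → ZMod 2))
    (htop : C a = ⊤) :
    (∃ G : AddSubgroup (Fin n → ℤ), (G : Set (Fin n → ℤ)) = GammaCF a C)
      ↔ (∀ i < a, ∀ c ∈ C i, ∀ d ∈ C i, c * d ∈ C (i + 1)) := by
  constructor
  · rintro ⟨G, hG⟩ i hi c hc d hd
    have mem_G : ∀ {j v}, j < a → ((2 ^ j : ℤ) • psi v ∈ G ↔ v ∈ C j) := fun hj => by
      rw [← SetLike.mem_coe, hG, two_pow_smul_psi_mem_GammaCF_iff hj]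
    rcases (Nat.succ_le_of_lt hi).lt_or_eq with hi' | rfl
    · have hprod : (2 ^ (i + 1) : ℤ) • psi (c * d)
          = (2 ^ i : ℤ) • psi c + (2 ^ i : ℤ) • psi d - (2 ^ i : ℤ) • psi (c + d) := by
        linear_combination (norm := module) (-2 ^ i : ℤ) • psi_add_psi c d
      rw [← mem_G hi', hprod]
      exact sub_mem (add_mem ((mem_G hi).2 hc) ((mem_G hi).2 hd)) ((mem_G hi).2 (add_mem hc hd))
    · simp [htop]
  · intro hC
    let S : AddSubmonoid (Fin n → ℤ) :=
      { carrier := GammaCF a C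
        add_mem' := fun hx hy => by
          simpa [psi_zero] using add_add_psi_mem_GammaCF hC hx hy (C 0).zero_mem
        zero_mem' := by simpa using two_pow_smul_mem_GammaCF C 0 }
    refine ⟨{ S with neg_mem' := S.neg_mem_of_nsmul_mem (pow_pos two_pos a) (fun l => ?_) }, rfl⟩
    change 2 ^ a • l ∈ GammaCF a C
    simpa using two_pow_smul_mem_GammaCF C l

/-- The code formula set `Γ_CF` is an additive subgroup of `ℤ^n`
(i.e., a lattice) if and only if the chain of codes is closed under Schur product:
for every `i < a` and `c, d ∈ C_i`, the componentwise product `c * d ∈ C_{i+1}`. -/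
theorem gammaCF_lattice_iff_schur {n a : ℕ}
    (C : ℕ → Submodule (ZMod 2) (Fin n → ZMod 2))
    (hmono : ∀ i < a, C i ≤ C (i + 1)) (htop : C a = ⊤) :
    (∃ G : AddSubgroup (Fin n → ℤ), (G : Set (Fin n → ℤ)) = GammaCF a C)
      ↔ (∀ i < a, ∀ c ∈ C i, ∀ d ∈ C i, c * d ∈ C (i + 1)) :=
  gammaCF_lattice_iff_schur_general C htop
end
end

section
/- Let C_0 ⊆ C_1 ⊆ ... ⊆ C_{a-1} ⊆ C_a = (ZMod 2)^n be a family of nested binary linear codes. Then there exists a linear code C over 𝒰_a (a 𝒰_a-submodule of (Fin n → 𝒰_a)) such that Γ_A' = Γ_CF over the Gaussian integers, where Γ_CF := { Σ_{i=0}^{a-1} (1+i)^i · ψ_ℂ(c_i) + (1+i)^a · l | c_i ∈ C_i, l ∈ (Fin n → ℤ[i]) } ⊆ (Fin n → ℤ[i]) and Γ_A' := { Φ_ℂ(c) + (1+i)^a · l | c ∈ C, l ∈ (Fin n → ℤ[i]) }. -/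
noncomputable section

set_option synthInstance.maxHeartbeats 400000

/-- The natural embedding of `(ZMod 2)^n` into `ℤ[i]^n`, applying coordinatewise the map
sending `0` to `0` and `1` to `1`. -/
def psiC {n : ℕ} (x : Fin n → ZMod 2) : Fin n → GaussianInt :=
  fun k => ((x k).val : GaussianInt)

/-- The quotient ring `𝒰_a = 𝔽₂[u]/u^a`. -/
abbrev Ua (a : ℕ) : Type :=
  Polynomial (ZMod 2) ⧸ Ideal.span {(Polynomial.X : Polynomial (ZMod 2)) ^ a}

/-- The image `u` of the variable `X` in `𝒰_a`. -/
noncomputable def uU (a : ℕ) : Ua a := Ideal.Quotient.mk _ Polynomial.X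

/-- The canonical representative (of degree `< a`) of an element of `𝒰_a`. -/
noncomputable def uaRep {a : ℕ} (x : Ua a) : Polynomial (ZMod 2) :=
  Function.surjInv
    (Ideal.Quotient.mk_surjective
      (I := Ideal.span {(Polynomial.X : Polynomial (ZMod 2)) ^ a})) x
    %ₘ (Polynomial.X ^ a)

/-- The coefficient `b_j` of `u^j` in `x = Σ_{j<a} b_j u^j ∈ 𝒰_a`. -/
noncomputable def uaCoeff {a : ℕ} (x : Ua a) (j : ℕ) : ZMod 2 := (uaRep x).coeff j

/-- The complex code formula set
`Γ_CF = ψ(C₀) + (1+i)ψ(C₁) + ... + (1+i)^{a-1}ψ(C_{a-1}) + (1+i)^a ℤ[i]^n`. -/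
def GammaCFC {n : ℕ} (a : ℕ) (C : ℕ → Submodule (ZMod 2) (Fin n → ZMod 2)) :
    Set (Fin n → GaussianInt) :=
  { x | ∃ (c : ℕ → Fin n → ZMod 2) (l : Fin n → GaussianInt),
      (∀ i < a, c i ∈ C i) ∧
      x = (∑ i ∈ Finset.range a,
            ((1 + Zsqrtd.sqrtd : GaussianInt) ^ i) • psiC (c i))
          + ((1 + Zsqrtd.sqrtd : GaussianInt) ^ a) • l }

/-- The map `Φ_ℂ : 𝒰_a → ℤ[i]` sending `Σ_{j<a} b_j u^j` to `Σ_{j<a} ψ(b_j) (1+i)^j`. -/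
noncomputable def PhiUC {a : ℕ} (x : Ua a) : GaussianInt :=
  ∑ j ∈ Finset.range a,
    ((uaCoeff x j).val : GaussianInt) * (1 + Zsqrtd.sqrtd : GaussianInt) ^ j

/-- `Φ_ℂ` extended componentwise to vectors. -/
noncomputable def PhiVC {n a : ℕ} (c : Fin n → Ua a) : Fin n → GaussianInt :=
  fun k => PhiUC (c k)

/-- The complex Construction A' set `Γ_{A'} = Φ_ℂ(C) + (1+i)^a ℤ[i]^n`. -/
def GammaA'C {n a : ℕ} (C : Set (Fin n → Ua a)) : Set (Fin n → GaussianInt) :=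
  { x | ∃ c ∈ C, ∃ l : Fin n → GaussianInt,
      x = PhiVC c + ((1 + Zsqrtd.sqrtd : GaussianInt) ^ a) • l }

/-!
A vector `m` over `𝒰_a = 𝔽₂[u]/(u^a)` is determined by its coefficient vectors
`m_j ∈ 𝔽₂^n` (`m = Σ_{j<a} m_j u^j`, every choice of the `m_j` occurring), and
`Φ_ℂ(m) = Σ_{j<a} (1+i)^j ψ_ℂ(m_j)`. So `Γ_{A'} = Γ_CF` for the code
`C = {m | m_j ∈ C_j for all j < a}`. It is a `𝒰_a`-submodule because the chain is nested:
the `j`-th coefficient vector of `r • m` is `Σ_{p+q=j} r_p m_q`, and `m_q ∈ C_q ≤ C_j`.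
-/

open Polynomial Finset

lemma monotoneOn_Iic_of_le_succ {α : Type*} [Preorder α] {f : ℕ → α} {a : ℕ}
    (hf : ∀ i < a, f i ≤ f (i + 1)) : MonotoneOn f (Set.Iic a) :=
  monotoneOn_of_le_succ Set.ordConnected_Iic fun i _ _ hi => hf i (Order.succ_le_iff.mp hi)

lemma Ideal.Quotient.mk_modByMonic {R : Type*} [CommRing R] (p q : R[X]) :
    Ideal.Quotient.mk (Ideal.span {q}) (p %ₘ q) = Ideal.Quotient.mk (Ideal.span {q}) p := by
  rw [Ideal.Quotient.eq, Ideal.mem_span_singleton, modByMonic_eq_sub_mul_div p q,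
    sub_sub_cancel_left, dvd_neg]
  exact dvd_mul_right _ _

section Coefficients

variable {a : ℕ}

lemma mk_uaRep (x : Ua a) : (Ideal.Quotient.mk _ (uaRep x) : Ua a) = x :=
  (Ideal.Quotient.mk_modByMonic _ _).trans (Function.surjInv_eq _ x)

lemma uaCoeff_mk (p : (ZMod 2)[X]) {j : ℕ} (hj : j < a) :
    uaCoeff (Ideal.Quotient.mk _ p : Ua a) j = p.coeff j := by
  have h : X ^ a ∣ uaRep (Ideal.Quotient.mk _ p : Ua a) - p :=
    Ideal.mem_span_singleton.mp (Ideal.Quotient.eq.mp (mk_uaRep _))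
  simpa [uaCoeff, sub_eq_zero] using X_pow_dvd_iff.mp h j hj

lemma uaCoeff_zero {j : ℕ} (hj : j < a) : uaCoeff (0 : Ua a) j = 0 := by
  rw [← map_zero (Ideal.Quotient.mk _), uaCoeff_mk _ hj, coeff_zero]

lemma uaCoeff_add {j : ℕ} (hj : j < a) (x y : Ua a) :
    uaCoeff (x + y) j = uaCoeff x j + uaCoeff y j := by
  conv_lhs => rw [← mk_uaRep x, ← mk_uaRep y, ← map_add]
  rw [uaCoeff_mk _ hj, coeff_add]
  rfl

lemma uaCoeff_mul {j : ℕ} (hj : j < a) (x y : Ua a) :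
    uaCoeff (x * y) j = ∑ p ∈ antidiagonal j, uaCoeff x p.1 * uaCoeff y p.2 := by
  conv_lhs => rw [← mk_uaRep x, ← mk_uaRep y, ← map_mul]
  rw [uaCoeff_mk _ hj, coeff_mul]
  rfl

lemma exists_uaCoeff_eq (b : ℕ → ZMod 2) : ∃ x : Ua a, ∀ j < a, uaCoeff x j = b j := by
  refine ⟨Ideal.Quotient.mk _ (∑ i ∈ range a, monomial i (b i)), fun j hj => ?_⟩
  rw [uaCoeff_mk _ hj, finsetSum_coeff]
  simp [coeff_monomial, hj]

end Coefficients

section CoefficientVectors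

variable {n a : ℕ}

def coeffVec (j : ℕ) (m : Fin n → Ua a) : Fin n → ZMod 2 := fun k => uaCoeff (m k) j

lemma coeffVec_zero {j : ℕ} (hj : j < a) : coeffVec j (0 : Fin n → Ua a) = 0 :=
  funext fun _ => uaCoeff_zero hj

lemma coeffVec_add {j : ℕ} (hj : j < a) (m m' : Fin n → Ua a) :
    coeffVec j (m + m') = coeffVec j m + coeffVec j m' :=
  funext fun k => uaCoeff_add hj (m k) (m' k)

lemma coeffVec_smul {j : ℕ} (hj : j < a) (r : Ua a) (m : Fin n → Ua a) :
    coeffVec j (r • m) = ∑ p ∈ antidiagonal j, uaCoeff r p.1 • coeffVec p.2 m := by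
  funext k
  simp only [Finset.sum_apply, Pi.smul_apply, smul_eq_mul]
  exact uaCoeff_mul hj r (m k)

lemma exists_coeffVec_eq (c : ℕ → Fin n → ZMod 2) :
    ∃ m : Fin n → Ua a, ∀ j < a, coeffVec j m = c j := by
  choose m hm using fun k => exists_uaCoeff_eq (a := a) fun j => c j k
  exact ⟨m, fun j hj => funext fun k => hm k j hj⟩

lemma PhiVC_eq_sum_coeffVec (m : Fin n → Ua a) :
    PhiVC m =
      ∑ j ∈ range a, ((1 + Zsqrtd.sqrtd : GaussianInt) ^ j) • psiC (coeffVec j m) := by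
  funext k
  simp [PhiVC, PhiUC, psiC, coeffVec, Finset.sum_apply, mul_comm]

def chainCode (C : ℕ → Submodule (ZMod 2) (Fin n → ZMod 2)) (hC : MonotoneOn C (Set.Iic a)) :
    Submodule (Ua a) (Fin n → Ua a) where
  carrier := {m | ∀ j < a, coeffVec j m ∈ C j}
  zero_mem' j hj := by
    rw [coeffVec_zero hj]
    exact zero_mem _
  add_mem' hm hm' j hj := by
    rw [coeffVec_add hj]
    exact add_mem (hm j hj) (hm' j hj)
  smul_mem' r m hm j hj := by
    rw [coeffVec_smul hj]
    refine Submodule.sum_mem _ fun p hp => Submodule.smul_mem _ _ ?_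
    have hpj : p.2 ≤ j := HasAntidiagonal.antidiagonal.snd_le hp
    exact hC (Set.mem_Iic.mpr (by omega)) (Set.mem_Iic.mpr hj.le) hpj (hm p.2 (by omega))

end CoefficientVectors

theorem exists_code_gammaA'_eq_gammaCF_gaussian_general {n a : ℕ}
    (C : ℕ → Submodule (ZMod 2) (Fin n → ZMod 2))
    (hmono : ∀ i < a, C i ≤ C (i + 1)) :
    ∃ M : Submodule (Ua a) (Fin n → Ua a),
      GammaA'C (M : Set (Fin n → Ua a)) = GammaCFC a C := by
  refine ⟨chainCode C (monotoneOn_Iic_of_le_succ hmono), Set.ext fun x => ⟨?_, ?_⟩⟩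
  · rintro ⟨m, hm, l, rfl⟩
    exact ⟨fun j => coeffVec j m, l, hm, by rw [PhiVC_eq_sum_coeffVec]⟩
  · rintro ⟨c, l, hc, rfl⟩
    obtain ⟨m, hm⟩ := exists_coeffVec_eq (a := a) c
    refine ⟨m, fun j hj => hm j hj ▸ hc j hj, l, ?_⟩
    rw [PhiVC_eq_sum_coeffVec]
    congr 1
    exact sum_congr rfl fun j hj => by rw [hm j (mem_range.mp hj)]

/-- For any family of nested binary linear codes there exists a linear
code `C` over `𝒰_a` such that, over the Gaussian integers, the Construction A' set
`Γ_{A'} = Φ_ℂ(C) + (1+i)^a ℤ[i]^n` equals the complex code formula set `Γ_CF`. -/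
theorem exists_code_gammaA'_eq_gammaCF_gaussian {n a : ℕ}
    (C : ℕ → Submodule (ZMod 2) (Fin n → ZMod 2))
    (hmono : ∀ i < a, C i ≤ C (i + 1)) (htop : C a = ⊤) :
    ∃ M : Submodule (Ua a) (Fin n → Ua a),
      GammaA'C (M : Set (Fin n → Ua a)) = GammaCFC a C :=
  exists_code_gammaA'_eq_gammaCF_gaussian_general C hmono
end
end
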